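/- Let N ≥ 6 be an integer. There exists a constant C > 0 such that for all real numbers k, l: |F(k+l) − F(k) − f(k)l − (1/2) f'(k) l²| ≤ C |l|^{2N/(N−2)}, where F(u) = ((N−2)/(2N))|u|^{2N/(N−2)}, f(u) = |u|^{4/(N−2)}u and f'(u) = ((N+2)/(N−2))|u|^{4/(N−2)}. -/

import Mathlib

/-!
Put `α = 4 / (N - 2)`, so that `2N / (N - 2) = α + 2`; the condition `N ≥ 6` is exactly `α ≤ 1`.
Then `t ↦ t ^ α` is subadditive on `[0, ∞)`, which makes `f' = c |u| ^ α` globally `α`-Hölder.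
The mean value inequality turns this into `|f (k + l) - f k - f' k l| ≤ c |l| ^ (α + 1)`, and a
second application, to `F (y) - f' k (y - k)² / 2`, gives the bound `c |l| ^ (α + 2)`.
-/

open Real

noncomputable def Fnl (N : ℕ) (u : ℝ) : ℝ :=
  (((N : ℝ) - 2) / (2 * (N : ℝ))) * |u| ^ (2 * (N : ℝ) / ((N : ℝ) - 2))

noncomputable def fnl (N : ℕ) (u : ℝ) : ℝ :=
  |u| ^ ((4 : ℝ) / ((N : ℝ) - 2)) * u

noncomputable def fprime (N : ℕ) (u : ℝ) : ℝ :=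
  (((N : ℝ) + 2) / ((N : ℝ) - 2)) * |u| ^ ((4 : ℝ) / ((N : ℝ) - 2))

open Set

lemma abs_abs_rpow_sub_abs_rpow_le {α : ℝ} (hα : 0 ≤ α) (hα1 : α ≤ 1) (a b : ℝ) :
    |(|a| ^ α - |b| ^ α)| ≤ |a - b| ^ α := by
  have key : ∀ x y : ℝ, |x| ^ α - |y| ^ α ≤ |x - y| ^ α := fun x y => by
    have : |x| ^ α ≤ (|y| + |x - y|) ^ α :=
      rpow_le_rpow (abs_nonneg _) (by linarith [abs_sub_abs_le_abs_sub x y]) hα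
    linarith [rpow_add_le_add_rpow (abs_nonneg y) (abs_nonneg (x - y)) hα hα1]
  exact abs_sub_le_iff.2 ⟨key a b, abs_sub_comm a b ▸ key b a⟩

lemma hasDerivAt_abs_rpow_mul_self {α : ℝ} (hα : 0 < α) (x : ℝ) :
    HasDerivAt (fun u : ℝ => |u| ^ α * u) ((α + 1) * |x| ^ α) x := by
  have hcont : Continuous fun u : ℝ => |u| ^ α := continuous_abs.rpow_const fun _ => Or.inr hα.le
  -- at `0`, where `|u|` is not differentiable, the derivative comes from its continuous extension
  refine hasDerivAt_of_hasDerivAt_of_ne' (x := 0) (fun y hy => ?_)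
    (hcont.mul continuous_id).continuousAt (hcont.const_mul _).continuousAt x
  refine (((hasDerivAt_abs hy).rpow_const (p := α) (Or.inl (abs_ne_zero.2 hy))).mul
    (hasDerivAt_id y)).congr_deriv ?_
  rw [id_eq, mul_one, mul_comm _ y, ← mul_assoc, ← mul_assoc, self_mul_sign,
    rpow_sub_one (abs_ne_zero.2 hy)]
  field_simp

section Taylor

variable {G g g' : ℝ → ℝ} {k l α C : ℝ}

lemma abs_sub_sub_mul_le_of_hasDerivAt {M : ℝ}
    (hg : ∀ y ∈ uIcc k (k + l), HasDerivAt g (g' y) y)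
    (hM : ∀ y ∈ uIcc k (k + l), |g' y - g' k| ≤ M) :
    |g (k + l) - g k - g' k * l| ≤ M * |l| := by
  have := (convex_uIcc k (k + l)).norm_image_sub_le_of_norm_hasDerivWithin_le
    (f := fun y => g y - g' k * y)
    (fun y hy => ((hg y hy).sub ((hasDerivAt_id y).const_mul (g' k))).hasDerivWithinAt)
    (by simpa only [mul_one, norm_eq_abs] using hM) left_mem_uIcc right_mem_uIcc
  rw [norm_eq_abs, norm_eq_abs, add_sub_cancel_left] at this
  convert this using 2
  ring

lemma abs_sub_sub_mul_le_of_holder (hg : ∀ y, HasDerivAt g (g' y) y) (hα : 0 ≤ α) (hC : 0 ≤ C)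
    (hg' : ∀ a b, |g' a - g' b| ≤ C * |a - b| ^ α) (k l : ℝ) :
    |g (k + l) - g k - g' k * l| ≤ C * |l| ^ α * |l| := by
  refine abs_sub_sub_mul_le_of_hasDerivAt (fun y _ => hg y) fun y hy => (hg' y k).trans ?_
  have := abs_sub_left_of_mem_uIcc hy
  rw [add_sub_cancel_left] at this
  gcongr

lemma abs_taylor_second_order_le_of_holder (hG : ∀ y, HasDerivAt G (g y) y)
    (hg : ∀ y, HasDerivAt g (g' y) y) (hα : 0 ≤ α) (hC : 0 ≤ C)
    (hg' : ∀ a b, |g' a - g' b| ≤ C * |a - b| ^ α) (k l : ℝ) :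
    |G (k + l) - G k - g k * l - (1 / 2) * g' k * l ^ 2| ≤ C * |l| ^ α * |l| * |l| := by
  have hφ : ∀ y, HasDerivAt (fun y => G y - (1 / 2) * g' k * (y - k) ^ 2)
      (g y - g' k * (y - k)) y := fun y => by
    refine ((hG y).sub ((((hasDerivAt_id y).sub_const k).pow 2).const_mul _)).congr_deriv ?_
    simp only [id_eq]
    ring
  have := abs_sub_sub_mul_le_of_hasDerivAt (M := C * |l| ^ α * |l|) (fun y _ => hφ y)
    fun y hy => by
      have hyk : |y - k| ≤ |l| := by simpa using abs_sub_left_of_mem_uIcc hy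
      calc |g y - g' k * (y - k) - (g k - g' k * (k - k))|
          = |g (k + (y - k)) - g k - g' k * (y - k)| := by ring_nf
        _ ≤ C * |y - k| ^ α * |y - k| := abs_sub_sub_mul_le_of_holder hg hα hC hg' k (y - k)
        _ ≤ C * |l| ^ α * |l| := by gcongr
  convert this using 2
  ring

end Taylor

section Nonlinearity

variable {N : ℕ}

lemma critical_exponent_eq (hN : 2 < N) :
    2 * (N : ℝ) / ((N : ℝ) - 2) = 4 / ((N : ℝ) - 2) + 2 := by
  have : (N : ℝ) - 2 ≠ 0 := sub_ne_zero.2 (by exact_mod_cast hN.ne')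
  field_simp
  ring

lemma hasDerivAt_fnl (hN : 2 < N) (x : ℝ) : HasDerivAt (fnl N) (fprime N x) x := by
  have hN' : (0 : ℝ) < (N : ℝ) - 2 := sub_pos.2 (by exact_mod_cast hN)
  refine (hasDerivAt_abs_rpow_mul_self (by positivity) x).congr_deriv ?_
  rw [fprime]
  field_simp
  ring

lemma hasDerivAt_Fnl (hN : 2 < N) (x : ℝ) : HasDerivAt (Fnl N) (fnl N x) x := by
  have hN' : (0 : ℝ) < (N : ℝ) - 2 := sub_pos.2 (by exact_mod_cast hN)
  have hp : 1 < 2 * (N : ℝ) / ((N : ℝ) - 2) := by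
    rw [critical_exponent_eq hN]
    linarith [show 0 < 4 / ((N : ℝ) - 2) by positivity]
  refine ((hasDerivAt_abs_rpow x hp).const_mul _).congr_deriv ?_
  rw [critical_exponent_eq hN, add_sub_cancel_right, fnl]
  field_simp
  ring

lemma abs_fprime_sub_fprime_le (hN : 6 ≤ N) (a b : ℝ) :
    |fprime N a - fprime N b| ≤
      ((N : ℝ) + 2) / ((N : ℝ) - 2) * |a - b| ^ (4 / ((N : ℝ) - 2)) := by
  have hN' : (4 : ℝ) ≤ (N : ℝ) - 2 := by
    have : (6 : ℝ) ≤ N := by exact_mod_cast hN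
    linarith
  have hc : 0 < ((N : ℝ) + 2) / ((N : ℝ) - 2) := by positivity
  simp only [fprime, ← mul_sub, abs_mul, abs_of_pos hc]
  gcongr
  exact abs_abs_rpow_sub_abs_rpow_le (by positivity) ((div_le_one (by linarith)).2 hN') a b

end Nonlinearity

theorem F_taylor_highdim (N : ℕ) (hN : 6 ≤ N) :
    ∃ C > (0 : ℝ), ∀ k l : ℝ,
      |Fnl N (k + l) - Fnl N k - fnl N k * l - (1 / 2) * fprime N k * l ^ 2| ≤
        C * |l| ^ (2 * (N : ℝ) / ((N : ℝ) - 2)) := by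
  have h2N : 2 < N := by omega
  have hN' : (0 : ℝ) < (N : ℝ) - 2 := sub_pos.2 (by exact_mod_cast h2N)
  refine ⟨((N : ℝ) + 2) / ((N : ℝ) - 2), by positivity, fun k l => ?_⟩
  calc _ ≤ ((N : ℝ) + 2) / ((N : ℝ) - 2) * |l| ^ (4 / ((N : ℝ) - 2)) * |l| * |l| :=
        abs_taylor_second_order_le_of_holder (hasDerivAt_Fnl h2N) (hasDerivAt_fnl h2N) (by positivity)
          (by positivity) (abs_fprime_sub_fprime_le hN) k l
    _ = _ := by
        rw [critical_exponent_eq h2N, rpow_add' (abs_nonneg l) (by positivity), rpow_two]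
        ring
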